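/- arXiv:1811.03526 — 2 statements merged into one kernel-verified Lean document; each statement's English description precedes it below -/
import Mathlib

section
/- For every r > 0 the identity −(1/2)·d/dr( Υ(r)·V₁(r) ) − (4Υ(r)/r⁵)·(r² − 4Mr + 3Q²) = (10Q²/r⁷)·(2r² − 5Mr + 3Q²) holds. Moreover 2r² − 5Mr + 3Q² > 0 for every r ≥ r_P, so the left-hand side is nonnegative for all r ≥ r_P. -/
noncomputable section

/-- The Reissner–Nordström lapse function `Υ(r) = 1 - 2M/r + Q²/r²`. -/
def Upsilon (M Q r : ℝ) : ℝ := 1 - 2*M/r + Q^2/r^2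

/-- The photon-sphere radius `r_P = (3M + √(9M² - 8Q²))/2`. -/
def rP (M Q : ℝ) : ℝ := (3*M + Real.sqrt (9*M^2 - 8*Q^2)) / 2

/-- The Regge–Wheeler potential `V₁(r) = r⁻²(4 - 8M/r + 14Q²/r²)`. -/
def V1 (M Q r : ℝ) : ℝ := (1 / r^2) * (4 - 8*M/r + 14*Q^2/r^2)

/-!
Both `Υ` and `V₁` are Laurent polynomials in `r`, so the identity is a rational-function identity
once the derivative is computed termwise. The radius `r_P` is the larger root of `r² - 3Mr + 2Q²`,
so at `r_P` the quadratic `2r² - 5Mr + 3Q²` equals `M r_P - Q² > 0`; it is increasing for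
`r ≥ 5M/4`, and `r_P ≥ 3M/2`.
-/

lemma hasDerivAt_const_div_pow (c : ℝ) (n : ℕ) {r : ℝ} (hr : r ≠ 0) :
    HasDerivAt (fun s => c / s ^ n) (-(n * c) / r ^ (n + 1)) r := by
  refine ((hasDerivAt_const r c).fun_div (hasDerivAt_pow n r) (pow_ne_zero n hr)).congr_deriv ?_
  rcases n with _ | n
  · simp
  · rw [Nat.add_sub_cancel]
    field_simp
    ring

lemma hasDerivAt_Upsilon (M Q : ℝ) {r : ℝ} (hr : r ≠ 0) :
    HasDerivAt (Upsilon M Q) (2 * M / r ^ 2 - 2 * Q ^ 2 / r ^ 3) r := by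
  have h1 := hasDerivAt_const_div_pow (2 * M) 1 hr
  have h2 := hasDerivAt_const_div_pow (Q ^ 2) 2 hr
  simp only [pow_one] at h1
  refine ((h1.const_sub 1).fun_add h2).congr_deriv ?_
  push_cast
  ring

lemma hasDerivAt_V1 (M Q : ℝ) {r : ℝ} (hr : r ≠ 0) :
    HasDerivAt (V1 M Q) (-8 / r ^ 3 + 24 * M / r ^ 4 - 56 * Q ^ 2 / r ^ 5) r := by
  have h0 := hasDerivAt_const_div_pow 1 2 hr
  have h1 := hasDerivAt_const_div_pow (8 * M) 1 hr
  have h2 := hasDerivAt_const_div_pow (14 * Q ^ 2) 2 hr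
  simp only [pow_one] at h1
  refine (h0.fun_mul ((h1.const_sub 4).fun_add h2)).congr_deriv ?_
  field_simp
  ring

lemma deriv_Upsilon_mul_V1_identity (M Q : ℝ) {r : ℝ} (hr : r ≠ 0) :
    -(1/2) * deriv (fun s => Upsilon M Q s * V1 M Q s) r
        - (4 * Upsilon M Q r / r^5) * (r^2 - 4*M*r + 3*Q^2)
        = (10*Q^2 / r^7) * (2*r^2 - 5*M*r + 3*Q^2) := by
  rw [((hasDerivAt_Upsilon M Q hr).fun_mul (hasDerivAt_V1 M Q hr)).deriv]
  simp only [Upsilon, V1]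
  field_simp
  ring

lemma rP_sq {M Q : ℝ} (h : 8 * Q ^ 2 ≤ 9 * M ^ 2) :
    rP M Q ^ 2 = 3 * M * rP M Q - 2 * Q ^ 2 := by
  have hs := Real.sq_sqrt (sub_nonneg.2 h)
  unfold rP
  linear_combination hs / 4

lemma three_half_mul_le_rP (M Q : ℝ) : 3 * M / 2 ≤ rP M Q := by
  unfold rP
  linarith [Real.sqrt_nonneg (9 * M ^ 2 - 8 * Q ^ 2)]

lemma quadratic_pos_of_rP_le {M Q r : ℝ} (hQ : |Q| < M) (hr : rP M Q ≤ r) :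
    0 < 2 * r ^ 2 - 5 * M * r + 3 * Q ^ 2 := by
  have hM : 0 < M := (abs_nonneg Q).trans_lt hQ
  have hQM : Q ^ 2 < M ^ 2 := sq_lt_sq' (neg_lt_of_abs_lt hQ) (lt_of_abs_lt hQ)
  set p := rP M Q
  have hp : 3 * M / 2 ≤ p := three_half_mul_le_rP M Q
  have h_root : p ^ 2 = 3 * M * p - 2 * Q ^ 2 := rP_sq (by nlinarith)
  have h_at_root : 0 < 2 * p ^ 2 - 5 * M * p + 3 * Q ^ 2 := by nlinarith
  have h_mono : 0 ≤ (r - p) * (2 * (r + p) - 5 * M) :=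
    mul_nonneg (sub_nonneg.2 hr) (by linarith)
  linarith

theorem A1_identity_and_nonneg_general (M Q : ℝ) (hQ : |Q| < M) :
    (∀ r : ℝ, 0 < r →
      -(1/2) * deriv (fun s => Upsilon M Q s * V1 M Q s) r
        - (4 * Upsilon M Q r / r^5) * (r^2 - 4*M*r + 3*Q^2)
        = (10*Q^2 / r^7) * (2*r^2 - 5*M*r + 3*Q^2)) ∧
    (∀ r : ℝ, rP M Q ≤ r → 0 < 2*r^2 - 5*M*r + 3*Q^2) ∧
    (∀ r : ℝ, rP M Q ≤ r →
      0 ≤ -(1/2) * deriv (fun s => Upsilon M Q s * V1 M Q s) r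
        - (4 * Upsilon M Q r / r^5) * (r^2 - 4*M*r + 3*Q^2)) := by
  refine ⟨fun r hr => deriv_Upsilon_mul_V1_identity M Q hr.ne',
    fun r hr => quadratic_pos_of_rP_le hQ hr, fun r hr => ?_⟩
  have hr0 : 0 < r := by
    linarith [three_half_mul_le_rP M Q, (abs_nonneg Q).trans_lt hQ]
  rw [deriv_Upsilon_mul_V1_identity M Q hr0.ne']
  exact mul_nonneg (by positivity) (quadratic_pos_of_rP_le hQ hr).le

theorem A1_identity_and_nonneg (M Q : ℝ) (hM : 0 < M) (hQ : |Q| < M) :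
    (∀ r : ℝ, 0 < r →
      -(1/2) * deriv (fun s => Upsilon M Q s * V1 M Q s) r
        - (4 * Upsilon M Q r / r^5) * (r^2 - 4*M*r + 3*Q^2)
        = (10*Q^2 / r^7) * (2*r^2 - 5*M*r + 3*Q^2)) ∧
    (∀ r : ℝ, rP M Q ≤ r → 0 < 2*r^2 - 5*M*r + 3*Q^2) ∧
    (∀ r : ℝ, rP M Q ≤ r →
      0 ≤ -(1/2) * deriv (fun s => Upsilon M Q s * V1 M Q s) r
        - (4 * Upsilon M Q r / r^5) * (r^2 - 4*M*r + 3*Q^2)) :=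
  A1_identity_and_nonneg_general M Q hQ
end
end

section
/- There exist a constant c > 0 and functions f, w on the exterior interval (r₊, ∞), with f twice continuously differentiable and w continuously differentiable, related by w(r) = r⁻²·Υ(r)·d/dr( r²·f(r) ), such that for every r ∈ (r₊, ∞) the following three bounds hold: f(r)·(r² − 3Mr + 2Q²)/r³ ≥ c·(r² − 3Mr + 2Q²)²/r⁵; f'(r) ≥ c/r³; and the function r ↦ r²·Υ(r)·w'(r) is non-increasing on (r₊, ∞). -/
/-!
Take `w ≡ 3`: then `w' = 0`, so the last condition is trivial, and the relation between `w` and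
`f` says that `F = r² f` is a primitive of `g = 3r²/Υ = 3r⁴/Δ`, `Δ = r² - 2Mr + Q²`. Choose the
primitive vanishing at the photon sphere `r_ps`, the outer root of `r² - 3Mr + 2Q²`.

Since `g ≥ 3r²`, `F - (r³ - r_ps³)` has the sign of `r - r_ps`, like `r² - 3Mr + 2Q²`; this gives
the first bound. For the second, `r³ f' = r g - 2F`. Inside the photon sphere `F ≤ 0`, so
`r g - 2F ≥ 3r³`. Between `r_ps` and `4M` the weight `g` increases, so `F ≤ (r - r_ps) g` and
`r g - 2F ≥ (2 r_ps - r) g`, which stays positive because `r_ps > 2M`. Beyond `4M`, `r g - 2F` is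
increasing, its derivative being `3r⁴(r² - 4Mr + 3Q²)/Δ²`.
-/

noncomputable section

/-- The event horizon radius `r₊ = M + √(M² - Q²)`. -/
def rplus (M Q : ℝ) : ℝ := M + Real.sqrt (M^2 - Q^2)

open Real Set

theorem sq_lt_sq_of_abs_lt {α : Type*} [Ring α] [LinearOrder α] [IsStrictOrderedRing α]
    {a b : α} (h : |a| < b) : a^2 < b^2 :=
  sq_lt_sq' (abs_lt.1 h).1 (abs_lt.1 h).2

theorem monotoneOn_of_hasDerivAt_nonneg {D : Set ℝ} (hD : Convex ℝ D) {f f' : ℝ → ℝ}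
    (hf : ∀ x ∈ D, HasDerivAt f (f' x) x) (hf' : ∀ x ∈ D, 0 ≤ f' x) : MonotoneOn f D :=
  monotoneOn_of_hasDerivWithinAt_nonneg hD
    (fun x hx => (hf x hx).continuousAt.continuousWithinAt)
    (fun x hx => (hf x (interior_subset hx)).hasDerivWithinAt)
    (fun x hx => hf' x (interior_subset hx))

/-- From the partial fraction decomposition `r⁴/((r - a)(r - c)) = r² + (a + c) r + a² + ac + c²`
`+ (a⁴/(r - a) - c⁴/(r - c))/(a - c)`. -/
def quarticPrimitive (a c r : ℝ) : ℝ :=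
  r^3 + 3/2*(a+c)*r^2 + 3*(a^2+a*c+c^2)*r + 3*(a^4*log (r-a) - c^4*log (r-c))/(a-c)

theorem hasDerivAt_quarticPrimitive {a c r : ℝ} (hac : a ≠ c) (ha : a < r) (hc : c < r) :
    HasDerivAt (quarticPrimitive a c) (3*r^4/((r-a)*(r-c))) r := by
  have hra : r - a ≠ 0 := (sub_pos.2 ha).ne'
  have hrc : r - c ≠ 0 := (sub_pos.2 hc).ne'
  have hlog (d : ℝ) (hd : r - d ≠ 0) : HasDerivAt (fun x => log (x - d)) (1/(r-d)) r := by
    simpa using ((hasDerivAt_id r).sub_const d).log hd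
  have := ((((hasDerivAt_pow 3 r).add ((hasDerivAt_pow 2 r).const_mul (3/2*(a+c)))).add
    ((hasDerivAt_id r).const_mul (3*(a^2+a*c+c^2)))).add
    ((((hlog a hra).const_mul (a^4)).sub ((hlog c hrc).const_mul (c^4))).const_mul 3
      |>.div_const (a-c)))
  refine this.congr_deriv ?_
  field_simp [sub_ne_zero.2 hac]
  ring

theorem contDiffOn_quarticPrimitive {a c : ℝ} {n : WithTop ℕ∞} (hca : c ≤ a) :
    ContDiffOn ℝ n (quarticPrimitive a c) (Ioi a) := by
  have hlog (d : ℝ) (hd : d ≤ a) : ContDiffOn ℝ n (fun x => log (x - d)) (Ioi a) :=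
    (contDiffOn_id.sub contDiffOn_const).log fun x hx => (sub_pos.2 (hd.trans_lt hx)).ne'
  unfold quarticPrimitive
  refine ContDiffOn.add (ContDiff.contDiffOn (by fun_prop)) ?_
  exact ((contDiffOn_const.mul (hlog a le_rfl)).sub (contDiffOn_const.mul (hlog c hca))).const_smul
    (3 : ℝ) |>.div_const _

def Delta (M Q r : ℝ) : ℝ := r^2 - 2*M*r + Q^2

def rminus (M Q : ℝ) : ℝ := M - √(M^2 - Q^2)

def photonSphere (M Q : ℝ) : ℝ := (3*M + √(9*M^2 - 8*Q^2)) / 2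

section ReissnerNordstrom

variable {M Q r : ℝ}

theorem Upsilon_eq_Delta_div (hr : r ≠ 0) : Upsilon M Q r = Delta M Q r / r^2 := by
  unfold Upsilon Delta
  field_simp

theorem hasDerivAt_Delta : HasDerivAt (Delta M Q) (2*r - 2*M) r := by
  have := ((hasDerivAt_pow 2 r).sub ((hasDerivAt_id r).const_mul (2*M))).add_const (Q^2)
  exact this.congr_deriv (by simp)

theorem Delta_eq_mul (hQM : Q^2 ≤ M^2) : Delta M Q r = (r - rplus M Q) * (r - rminus M Q) := by
  have hs := Real.sq_sqrt (sub_nonneg.2 hQM)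
  unfold Delta rplus rminus
  linear_combination hs

theorem le_rplus : M ≤ rplus M Q := le_add_of_nonneg_right (Real.sqrt_nonneg _)

theorem pos_of_rplus_lt (hQ : |Q| < M) (hr : rplus M Q < r) : 0 < r :=
  ((abs_nonneg Q).trans_lt hQ).trans_le le_rplus |>.trans hr

theorem rminus_lt_rplus (hQ : |Q| < M) : rminus M Q < rplus M Q := by
  have : 0 < √(M^2 - Q^2) :=
    Real.sqrt_pos.2 (sub_pos.2 (sq_lt_sq_of_abs_lt hQ))
  rw [rminus, rplus]
  linarith

theorem Delta_pos (hQ : |Q| < M) (hr : rplus M Q < r) : 0 < Delta M Q r := by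
  rw [Delta_eq_mul (sq_lt_sq_of_abs_lt hQ).le]
  exact mul_pos (sub_pos.2 hr) (sub_pos.2 ((rminus_lt_rplus hQ).trans hr))

theorem Delta_lt_sq (hQ : |Q| < M) (hr : rplus M Q < r) : Delta M Q r < r^2 := by
  have hMr : M < r := le_rplus.trans_lt hr
  have hQ2 : Q^2 < M^2 := sq_lt_sq_of_abs_lt hQ
  unfold Delta
  nlinarith [(abs_nonneg Q).trans_lt hQ]

theorem three_mul_sq_le_div_Delta (hQ : |Q| < M) (hr : rplus M Q < r) :
    3*r^2 ≤ 3*r^4/Delta M Q r := by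
  rw [le_div_iff₀ (Delta_pos hQ hr)]
  nlinarith [Delta_lt_sq hQ hr, sq_nonneg r]

theorem sq_sub_three_mul_add_eq_mul (hQ : |Q| < M) :
    r^2 - 3*M*r + 2*Q^2 = (r - photonSphere M Q) * (r - (3*M - photonSphere M Q)) := by
  have hQ2 : Q^2 < M^2 := sq_lt_sq_of_abs_lt hQ
  have ht := Real.sq_sqrt (show 0 ≤ 9*M^2 - 8*Q^2 by nlinarith [sq_nonneg Q])
  unfold photonSphere
  linear_combination (1/4 : ℝ) * ht

theorem photonSphere_le (hM : 0 ≤ M) : photonSphere M Q ≤ 3*M := by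
  have : √(9*M^2 - 8*Q^2) ≤ 3*M :=
    Real.sqrt_le_iff.2 ⟨by linarith, by nlinarith [sq_nonneg Q]⟩
  unfold photonSphere
  linarith

theorem two_mul_lt_photonSphere (hQ : |Q| < M) : 2*M < photonSphere M Q := by
  have hQ2 : Q^2 < M^2 := sq_lt_sq_of_abs_lt hQ
  have : M < √(9*M^2 - 8*Q^2) := Real.lt_sqrt_of_sq_lt (by linarith)
  unfold photonSphere
  linarith

theorem rplus_lt_photonSphere (hQ : |Q| < M) : rplus M Q < photonSphere M Q := by
  have hQ2 : Q^2 < M^2 := sq_lt_sq_of_abs_lt hQ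
  have hs : √(M^2 - Q^2) ≤ M :=
    Real.sqrt_le_iff.2 ⟨(abs_nonneg Q).trans hQ.le, by nlinarith [sq_nonneg Q]⟩
  have ht : √(M^2 - Q^2) < √(9*M^2 - 8*Q^2) :=
    Real.sqrt_lt_sqrt (by linarith) (by nlinarith [sq_nonneg M])
  unfold rplus photonSphere
  linarith

/-- `∫_{r_ps}^r 3ρ²/Υ(ρ) dρ`, with `r_ps` the photon sphere. -/
def morawetzPrimitive (M Q r : ℝ) : ℝ :=
  quarticPrimitive (rplus M Q) (rminus M Q) r
    - quarticPrimitive (rplus M Q) (rminus M Q) (photonSphere M Q)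

theorem morawetzPrimitive_photonSphere : morawetzPrimitive M Q (photonSphere M Q) = 0 :=
  sub_self _

theorem hasDerivAt_morawetzPrimitive (hQ : |Q| < M) (hr : rplus M Q < r) :
    HasDerivAt (morawetzPrimitive M Q) (3*r^4/Delta M Q r) r := by
  rw [Delta_eq_mul (sq_lt_sq_of_abs_lt hQ).le]
  exact (hasDerivAt_quarticPrimitive (rminus_lt_rplus hQ).ne' hr
    ((rminus_lt_rplus hQ).trans hr)).sub_const _

theorem contDiffOn_morawetzPrimitive (hQ : |Q| < M) {n : WithTop ℕ∞} :
    ContDiffOn ℝ n (morawetzPrimitive M Q) (Ioi (rplus M Q)) :=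
  (contDiffOn_quarticPrimitive (rminus_lt_rplus hQ).le).sub contDiffOn_const

theorem monotoneOn_morawetzPrimitive_sub_cube (hQ : |Q| < M) :
    MonotoneOn (fun r => morawetzPrimitive M Q r - r^3) (Ioi (rplus M Q)) :=
  monotoneOn_of_hasDerivAt_nonneg (convex_Ioi _)
    (fun r hr => (hasDerivAt_morawetzPrimitive hQ hr).sub (hasDerivAt_pow 3 r))
    (fun r hr => by simpa using three_mul_sq_le_div_Delta hQ hr)

theorem cube_sub_cube_le_morawetzPrimitive (hQ : |Q| < M) (hr : photonSphere M Q ≤ r) :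
    r^3 - photonSphere M Q ^ 3 ≤ morawetzPrimitive M Q r := by
  have hb := rplus_lt_photonSphere hQ
  have := monotoneOn_morawetzPrimitive_sub_cube hQ hb (hb.trans_le hr) hr
  simp only [morawetzPrimitive_photonSphere] at this
  linarith

theorem morawetzPrimitive_le_cube_sub_cube (hQ : |Q| < M) (hr : rplus M Q < r)
    (hrb : r ≤ photonSphere M Q) : morawetzPrimitive M Q r ≤ r^3 - photonSphere M Q ^ 3 := by
  have := monotoneOn_morawetzPrimitive_sub_cube hQ hr (hr.trans_le hrb) hrb
  simp only [morawetzPrimitive_photonSphere] at this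
  linarith

theorem mul_sq_le_morawetzPrimitive_mul (hQ : |Q| < M) (hr : rplus M Q < r) :
    M * (r^2 - 3*M*r + 2*Q^2)^2 ≤ morawetzPrimitive M Q r * (r^2 - 3*M*r + 2*Q^2) := by
  set b := photonSphere M Q
  have hM : 0 < M := (abs_nonneg Q).trans_lt hQ
  have hb2 : 2*M < b := two_mul_lt_photonSphere hQ
  have hMr : M < r := le_rplus.trans_lt hr
  have hsign : 0 ≤ (morawetzPrimitive M Q r - (r^3 - b^3)) * (r^2 - 3*M*r + 2*Q^2) := by
    rw [sq_sub_three_mul_add_eq_mul hQ, ← mul_assoc]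
    refine mul_nonneg ?_ (by linarith)
    rcases le_total b r with hbr | hrb
    · exact mul_nonneg (by linarith [cube_sub_cube_le_morawetzPrimitive hQ hbr]) (by linarith)
    · exact mul_nonneg_of_nonpos_of_nonpos
        (by linarith [morawetzPrimitive_le_cube_sub_cube hQ hr hrb]) (by linarith)
  have hcube : M * (r^2 - 3*M*r + 2*Q^2)^2 ≤ (r^3 - b^3) * (r^2 - 3*M*r + 2*Q^2) := by
    rw [sq_sub_three_mul_add_eq_mul hQ, ← sub_nonneg]
    have : 0 ≤ r^2 + r*b + b^2 - M*(r - (3*M - b)) := by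
      nlinarith [mul_pos (hM.trans hMr) (sub_pos.2 hMr),
        mul_pos (show 0 < b by linarith) (sub_pos.2 hMr)]
    have := mul_nonneg (mul_nonneg (sq_nonneg (r - b)) (by linarith : 0 ≤ r - (3*M - b))) this
    linear_combination this
  linarith

theorem monotoneOn_div_Delta (hQ : |Q| < M) :
    MonotoneOn (fun r => 3*r^4/Delta M Q r) (Ici (photonSphere M Q)) := by
  have hb := rplus_lt_photonSphere hQ
  refine monotoneOn_of_hasDerivAt_nonneg (convex_Ici _) (fun r hr =>
    ((hasDerivAt_pow 4 r).const_mul 3).div hasDerivAt_Delta (Delta_pos hQ (hb.trans_le hr)).ne')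
    fun r hr => div_nonneg ?_ (sq_nonneg _)
  have hX : 0 ≤ r^2 - 3*M*r + 2*Q^2 := by
    rw [sq_sub_three_mul_add_eq_mul hQ]
    exact mul_nonneg (sub_nonneg.2 hr)
      (by linarith [two_mul_lt_photonSphere hQ, mem_Ici.1 hr, (abs_nonneg Q).trans_lt hQ])
  have hr0 : 0 ≤ r := (pos_of_rplus_lt hQ (hb.trans_le hr)).le
  refine (by positivity : 0 ≤ 6*r^3 * (r^2 - 3*M*r + 2*Q^2)).trans_eq ?_
  unfold Delta
  push_cast
  ring

theorem morawetzPrimitive_le_mul_div_Delta (hQ : |Q| < M) (hr : photonSphere M Q ≤ r) :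
    morawetzPrimitive M Q r ≤ (r - photonSphere M Q) * (3*r^4/Delta M Q r) := by
  set b := photonSphere M Q
  have hb := rplus_lt_photonSphere hQ
  have := monotoneOn_of_hasDerivAt_nonneg (convex_Icc b r)
    (f := fun ρ => (ρ - b) * (3*r^4/Delta M Q r) - morawetzPrimitive M Q ρ)
    (fun ρ hρ => (((hasDerivAt_id ρ).sub_const b).mul_const _).sub
      (hasDerivAt_morawetzPrimitive hQ (hb.trans_le hρ.1)))
    (fun ρ hρ => by
      simpa using monotoneOn_div_Delta hQ (mem_Ici.2 hρ.1) (mem_Ici.2 hr) hρ.2)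
    ⟨le_rfl, hr⟩ ⟨hr, le_rfl⟩ hr
  have hFb : morawetzPrimitive M Q b = 0 := morawetzPrimitive_photonSphere
  simp only [sub_self, zero_mul] at this
  linarith

def morawetzDerivNum (M Q r : ℝ) : ℝ := r * (3*r^4/Delta M Q r) - 2*morawetzPrimitive M Q r

theorem hasDerivAt_morawetzDerivNum (hQ : |Q| < M) (hr : rplus M Q < r) :
    HasDerivAt (morawetzDerivNum M Q)
      (3*r^4*(r^2 - 4*M*r + 3*Q^2)/Delta M Q r^2) r := by
  have hΔ := Delta_pos hQ hr
  have hg := ((hasDerivAt_pow 4 r).const_mul 3).fun_div hasDerivAt_Delta hΔ.ne'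
  refine ((hasDerivAt_id' r).fun_mul hg |>.sub
    ((hasDerivAt_morawetzPrimitive hQ hr).const_mul 2)).congr_deriv ?_
  field_simp
  unfold Delta
  push_cast
  ring

theorem monotoneOn_morawetzDerivNum (hQ : |Q| < M) :
    MonotoneOn (morawetzDerivNum M Q) (Ici (4*M)) := by
  have hM : 0 < M := (abs_nonneg Q).trans_lt hQ
  have h4M : rplus M Q < 4*M := by
    have := rplus_lt_photonSphere hQ
    linarith [photonSphere_le (M := M) (Q := Q) hM.le]
  refine monotoneOn_of_hasDerivAt_nonneg (convex_Ici _)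
    (fun r hr => hasDerivAt_morawetzDerivNum hQ (h4M.trans_le hr)) fun r hr => ?_
  have : 0 ≤ r^2 - 4*M*r + 3*Q^2 := by nlinarith [mem_Ici.1 hr, sq_nonneg Q]
  positivity

theorem three_mul_cube_le_morawetzDerivNum (hQ : |Q| < M) (hr : rplus M Q < r)
    (hrb : r ≤ photonSphere M Q) : 3*M^3 ≤ morawetzDerivNum M Q r := by
  have hM : 0 < M := (abs_nonneg Q).trans_lt hQ
  have hMr : M ≤ r := le_rplus.trans hr.le
  have hF : morawetzPrimitive M Q r ≤ 0 := by
    linarith [morawetzPrimitive_le_cube_sub_cube hQ hr hrb,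
      pow_le_pow_left₀ (hM.le.trans hMr) hrb 3]
  have hg : r*(3*r^2) ≤ r*(3*r^4/Delta M Q r) :=
    mul_le_mul_of_nonneg_left (three_mul_sq_le_div_Delta hQ hr) (hM.le.trans hMr)
  unfold morawetzDerivNum
  nlinarith [pow_le_pow_left₀ hM.le hMr 3]

theorem le_morawetzDerivNum_of_le_four_mul (hQ : |Q| < M) (hbr : photonSphere M Q ≤ r)
    (hr4 : r ≤ 4*M) : 6*M^2*(photonSphere M Q - 2*M) ≤ morawetzDerivNum M Q r := by
  have hr := (rplus_lt_photonSphere hQ).trans_le hbr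
  have hMr : M ≤ r := le_rplus.trans hr.le
  have hb2 := two_mul_lt_photonSphere hQ
  have hF := morawetzPrimitive_le_mul_div_Delta hQ hbr
  have hg : 3*M^2 ≤ 3*r^4/Delta M Q r := by
    nlinarith [three_mul_sq_le_div_Delta hQ hr, (abs_nonneg Q).trans_lt hQ]
  unfold morawetzDerivNum
  nlinarith

theorem le_morawetzDerivNum (hQ : |Q| < M) (hr : rplus M Q < r) :
    3*M^2*(photonSphere M Q - 2*M) ≤ morawetzDerivNum M Q r := by
  have hM : 0 < M := (abs_nonneg Q).trans_lt hQ
  have hb2 := two_mul_lt_photonSphere hQ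
  have hb3 := photonSphere_le (Q := Q) hM.le
  rcases le_total r (photonSphere M Q) with hrb | hbr
  · nlinarith [three_mul_cube_le_morawetzDerivNum hQ hr hrb]
  rcases le_total r (4*M) with hr4 | h4r
  · nlinarith [le_morawetzDerivNum_of_le_four_mul hQ hbr hr4]
  · have h4 := le_morawetzDerivNum_of_le_four_mul hQ (by linarith) le_rfl
    have := monotoneOn_morawetzDerivNum hQ (mem_Ici.2 le_rfl) (mem_Ici.2 h4r) h4r
    nlinarith

def morawetzMultiplier (M Q r : ℝ) : ℝ := morawetzPrimitive M Q r / r^2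

theorem contDiffOn_morawetzMultiplier (hQ : |Q| < M) {n : WithTop ℕ∞} :
    ContDiffOn ℝ n (morawetzMultiplier M Q) (Ioi (rplus M Q)) :=
  (contDiffOn_morawetzPrimitive hQ).div (contDiff_id.pow 2).contDiffOn fun _ hx =>
    pow_ne_zero 2 (pos_of_rplus_lt hQ hx).ne'

theorem deriv_morawetzMultiplier (hQ : |Q| < M) (hr : rplus M Q < r) :
    deriv (morawetzMultiplier M Q) r = morawetzDerivNum M Q r / r^3 := by
  have hr0 : r ≠ 0 := (pos_of_rplus_lt hQ hr).ne'
  have hf : HasDerivAt (morawetzMultiplier M Q) _ r :=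
    (hasDerivAt_morawetzPrimitive hQ hr).div (hasDerivAt_pow 2 r) (pow_ne_zero 2 hr0)
  rw [hf.deriv]
  unfold morawetzDerivNum
  field_simp
  push_cast
  ring

theorem Upsilon_div_sq_mul_deriv_sq_mul_morawetzMultiplier (hQ : |Q| < M) (hr : rplus M Q < r) :
    Upsilon M Q r / r^2 * deriv (fun s => s^2 * morawetzMultiplier M Q s) r = 3 := by
  have hr0 : r ≠ 0 := (pos_of_rplus_lt hQ hr).ne'
  have hF : (fun s => s^2 * morawetzMultiplier M Q s) =ᶠ[nhds r] morawetzPrimitive M Q := by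
    filter_upwards [eventually_ne_nhds hr0] with s hs
    unfold morawetzMultiplier
    field_simp
  rw [hF.deriv_eq, (hasDerivAt_morawetzPrimitive hQ hr).deriv, Upsilon_eq_Delta_div hr0]
  field_simp [(Delta_pos hQ hr).ne']

end ReissnerNordstrom

theorem morawetz_multiplier_exists_general (M Q : ℝ) (hQ : |Q| < M) :
    ∃ (c : ℝ) (f w : ℝ → ℝ), 0 < c ∧
      ContDiffOn ℝ 2 f (Set.Ioi (rplus M Q)) ∧
      ContDiffOn ℝ 1 w (Set.Ioi (rplus M Q)) ∧
      (∀ r ∈ Set.Ioi (rplus M Q),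
        w r = (Upsilon M Q r / r^2) * deriv (fun s => s^2 * f s) r) ∧
      (∀ r ∈ Set.Ioi (rplus M Q),
        c * (r^2 - 3*M*r + 2*Q^2)^2 / r^5
          ≤ f r * ((r^2 - 3*M*r + 2*Q^2) / r^3)) ∧
      (∀ r ∈ Set.Ioi (rplus M Q), c / r^3 ≤ deriv f r) ∧
      AntitoneOn (fun r => r^2 * Upsilon M Q r * deriv w r)
        (Set.Ioi (rplus M Q)) := by
  have hM : 0 < M := (abs_nonneg Q).trans_lt hQ
  have hc : 0 < 3*M^2*(photonSphere M Q - 2*M) := by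
    have := two_mul_lt_photonSphere hQ
    have : 0 < photonSphere M Q - 2*M := by linarith
    positivity
  refine ⟨min M (3*M^2*(photonSphere M Q - 2*M)), morawetzMultiplier M Q, fun _ => 3,
    lt_min hM hc, contDiffOn_morawetzMultiplier hQ, contDiffOn_const,
    fun r hr => (Upsilon_div_sq_mul_deriv_sq_mul_morawetzMultiplier hQ hr).symm,
    fun r hr => ?_, fun r hr => ?_, ?_⟩
  · have hr0 := pos_of_rplus_lt hQ hr
    calc min M (3*M^2*(photonSphere M Q - 2*M)) * (r^2 - 3*M*r + 2*Q^2)^2 / r^5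
        ≤ M * (r^2 - 3*M*r + 2*Q^2)^2 / r^5 := by gcongr; exact min_le_left _ _
      _ ≤ morawetzPrimitive M Q r * (r^2 - 3*M*r + 2*Q^2) / r^5 :=
        div_le_div_of_nonneg_right (mul_sq_le_morawetzPrimitive_mul hQ hr) (by positivity)
      _ = morawetzMultiplier M Q r * ((r^2 - 3*M*r + 2*Q^2) / r^3) := by
        unfold morawetzMultiplier; field_simp
  · have hr0 := pos_of_rplus_lt hQ hr
    rw [deriv_morawetzMultiplier hQ hr]
    gcongr
    exact (min_le_right _ _).trans (le_morawetzDerivNum hQ hr)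
  · simp only [deriv_const', mul_zero]
    exact antitoneOn_const

theorem morawetz_multiplier_exists (M Q : ℝ) (hM : 0 < M) (hQ : |Q| < M) :
    ∃ (c : ℝ) (f w : ℝ → ℝ), 0 < c ∧
      ContDiffOn ℝ 2 f (Set.Ioi (rplus M Q)) ∧
      ContDiffOn ℝ 1 w (Set.Ioi (rplus M Q)) ∧
      (∀ r ∈ Set.Ioi (rplus M Q),
        w r = (Upsilon M Q r / r^2) * deriv (fun s => s^2 * f s) r) ∧
      (∀ r ∈ Set.Ioi (rplus M Q),
        c * (r^2 - 3*M*r + 2*Q^2)^2 / r^5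
          ≤ f r * ((r^2 - 3*M*r + 2*Q^2) / r^3)) ∧
      (∀ r ∈ Set.Ioi (rplus M Q), c / r^3 ≤ deriv f r) ∧
      AntitoneOn (fun r => r^2 * Upsilon M Q r * deriv w r)
        (Set.Ioi (rplus M Q)) :=
  morawetz_multiplier_exists_general M Q hQ
end
end
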